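/- arXiv:2008.12601 — 7 statements merged into one kernel-verified Lean document; each statement's English description precedes it below -/
import Mathlib

section
/- For any bounded real random variable Z with values in [m, M], expected value μ, and variance Var(Z), it holds that Var(Z) ≤ (μ − m)(M − μ). -/
open MeasureTheory ProbabilityTheory

/-- **Bhatia–Davis inequality**: for a bounded real random variable `Z` with values in
`[m, M]` (almost surely) on a probability space, `Var(Z) ≤ (μ − m) * (M − μ)` where
`μ = E[Z]`. -/
theorem bhatia_davis {Ω : Type*} [MeasurableSpace Ω] (μ : Measure Ω) [IsProbabilityMeasure μ]
    (Z : Ω → ℝ) (m M : ℝ) (hZ : AEMeasurable Z μ)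
    (hbdd : ∀ᵐ ω ∂μ, Z ω ∈ Set.Icc m M) :
    variance Z μ ≤ ((∫ ω, Z ω ∂μ) - m) * (M - ∫ ω, Z ω ∂μ) := by
  have hmem : MemLp Z 2 μ := memLp_of_bounded hbdd hZ.aestronglyMeasurable 2
  have hint : Integrable Z μ := hmem.integrable one_le_two
  have hint2 : Integrable (fun ω => Z ω ^ 2) μ := hmem.integrable_sq
  have key : 0 ≤ ∫ ω, (M - Z ω) * (Z ω - m) ∂μ := by
    refine integral_nonneg_of_ae ?_
    filter_upwards [hbdd] with ω hω
    exact mul_nonneg (by linarith [hω.2]) (by linarith [hω.1])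
  have hexp : ∫ ω, (M - Z ω) * (Z ω - m) ∂μ
      = (M + m) * (∫ ω, Z ω ∂μ) - M * m - ∫ ω, Z ω ^ 2 ∂μ := by
    have : ∀ ω, (M - Z ω) * (Z ω - m) = (M + m) * Z ω - M * m - Z ω ^ 2 := by
      intro ω; ring
    simp_rw [this]
    have h1 : Integrable (fun ω => (M + m) * Z ω - M * m) μ :=
      (hint.const_mul _).sub (integrable_const _)
    rw [integral_sub h1 hint2, integral_sub (hint.const_mul _) (integrable_const _),
      MeasureTheory.integral_const_mul]
    simp
  rw [variance_eq_sub hmem]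
  simp only [Pi.pow_apply]
  rw [hexp] at key
  nlinarith [key]
end

section
/- Let G be a finite, simple, connected, non-complete graph on n vertices with minimum degree δ. For t ∈ {1, …, n−δ}, let a(G,t) = t + Σ_{u∈V} C(n−d(u)−1,t)/C(n,t). Then a(G,t) < n. -/
open Finset

lemma choose_key (m t : ℕ) (ht1 : 1 ≤ t) (htn : t ≤ m + 1) :
    (m + 2) * m.choose t < (m + 2 - t) * (m + 2).choose t := by
  have h1 : m.choose t * (m + 1) = (m + 1).choose t * (m + 1 - t) :=
    Nat.choose_mul_succ_eq m t
  have h2 : (m + 1).choose t * (m + 2) = (m + 2).choose t * (m + 2 - t) :=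
    Nat.choose_mul_succ_eq (m + 1) t
  have key : (m + 2) * m.choose t * (m + 1)
      = (m + 2 - t) * (m + 2).choose t * (m + 1 - t) := by
    calc (m + 2) * m.choose t * (m + 1) = (m.choose t * (m + 1)) * (m + 2) := by ring
    _ = ((m + 1).choose t * (m + 1 - t)) * (m + 2) := by rw [h1]
    _ = ((m + 1).choose t * (m + 2)) * (m + 1 - t) := by ring
    _ = ((m + 2).choose t * (m + 2 - t)) * (m + 1 - t) := by rw [h2]
    _ = (m + 2 - t) * (m + 2).choose t * (m + 1 - t) := by ring
  have hpos : 0 < (m + 2 - t) * (m + 2).choose t := by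
    have : 0 < (m + 2).choose t := Nat.choose_pos (by omega)
    have : 0 < m + 2 - t := by omega
    positivity
  have hlt : (m + 2 - t) * (m + 2).choose t * (m + 1 - t)
      < (m + 2 - t) * (m + 2).choose t * (m + 1) :=
    mul_lt_mul_of_pos_left (by omega) hpos
  have := key ▸ hlt
  exact Nat.lt_of_mul_lt_mul_right this

/-- For `G ∈ Γ_n` and `t ∈ [n − δ]`,
`a(G,t) = t + Σ_u C(n−d(u)−1, t)/C(n, t) < n`. -/
theorem a_lt_n {V : Type*} [Fintype V] [DecidableEq V]
    (G : SimpleGraph V) [DecidableRel G.Adj]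
    (hconn : G.Connected) (hnc : G ≠ ⊤)
    (t : ℕ) (ht1 : 1 ≤ t) (ht2 : t ≤ Fintype.card V - G.minDegree) :
    (t : ℝ) + ∑ u : V,
        ((Fintype.card V - G.degree u - 1).choose t : ℝ) / ((Fintype.card V).choose t : ℝ)
      < (Fintype.card V : ℝ) := by
  classical
  set n := Fintype.card V with hn
  haveI hne : Nonempty V := hconn.nonempty
  -- n ≥ 2
  have hn2 : 2 ≤ n := by
    by_contra h
    apply hnc
    have hsub : Subsingleton V := by
      apply Fintype.card_le_one_iff_subsingleton.mp; omega
    ext u v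
    simp only [SimpleGraph.top_adj]
    constructor
    · intro h; exact h.ne
    · intro h; exact absurd (Subsingleton.elim u v) h
  -- every degree ≥ 1
  have hdeg : ∀ u : V, 1 ≤ G.degree u := by
    intro u
    rw [Nat.one_le_iff_ne_zero, ← Nat.pos_iff_ne_zero, G.degree_pos_iff_exists_adj u]
    obtain ⟨v, hv⟩ := Fintype.exists_ne_of_one_lt_card (by omega) u
    obtain ⟨p⟩ := hconn u v
    cases p with
    | nil => exact absurd rfl hv
    | cons h q => exact ⟨_, h⟩
  have hδ : 1 ≤ G.minDegree := by
    obtain ⟨w, hw⟩ := G.exists_minimal_degree_vertex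
    rw [hw]; exact hdeg w
  have htn : t ≤ n - 1 := by omega
  obtain ⟨m, hm⟩ : ∃ m, n = m + 2 := ⟨n - 2, by omega⟩
  have hC : 0 < (n.choose t : ℝ) := by
    have : 0 < n.choose t := Nat.choose_pos (by omega)
    exact_mod_cast this
  -- bound each summand
  have hterm : ∀ u : V, ((n - G.degree u - 1).choose t : ℝ) / (n.choose t : ℝ)
      ≤ (m.choose t : ℝ) / (n.choose t : ℝ) := by
    intro u
    gcongr
    have hdu := hdeg u
    exact (by omega : n - G.degree u - 1 ≤ m)
  have hsum : ∑ u : V, ((n - G.degree u - 1).choose t : ℝ) / (n.choose t : ℝ)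
      ≤ (n : ℝ) * ((m.choose t : ℝ) / (n.choose t : ℝ)) := by
    calc ∑ u : V, ((n - G.degree u - 1).choose t : ℝ) / (n.choose t : ℝ)
        ≤ ∑ _u : V, (m.choose t : ℝ) / (n.choose t : ℝ) := Finset.sum_le_sum fun u _ => hterm u
      _ = (n : ℝ) * ((m.choose t : ℝ) / (n.choose t : ℝ)) := by
          rw [Finset.sum_const, Finset.card_univ]; simp [hn, nsmul_eq_mul]
  have hkey : (n : ℝ) * ((m.choose t : ℝ) / (n.choose t : ℝ)) < (n : ℝ) - t := by
    have hnat : n * m.choose t < (n - t) * n.choose t := by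
      rw [hm]; exact choose_key m t ht1 (by omega)
    have hr : (n : ℝ) * (m.choose t : ℝ) < ((n : ℝ) - t) * (n.choose t : ℝ) := by
      have h := (Nat.cast_lt (α := ℝ)).mpr hnat
      push_cast [Nat.cast_sub (show t ≤ n by omega)] at h
      linarith
    rw [← mul_div_assoc, div_lt_iff₀ hC]
    exact hr
  calc (t : ℝ) + ∑ u : V, ((n - G.degree u - 1).choose t : ℝ) / (n.choose t : ℝ)
      ≤ (t : ℝ) + (n : ℝ) * ((m.choose t : ℝ) / (n.choose t : ℝ)) := by linarith [hsum]
    _ < (t : ℝ) + ((n : ℝ) - t) := by linarith [hkey]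
    _ = (n : ℝ) := by ring
end

section
/- Let G be a finite, simple, connected, non-complete graph on n vertices with minimum degree δ, and for t ∈ {1,…,n−δ} let a(G,t) = t + Σ_{u∈V} C(n−d(u)−1,t)/C(n,t) and b(G,t) = Σ_{u∈V} C(n−d(u)−1,t)/C(n,t) + 2 Σ_{{u,v}∈C(V,2)} C(n−|N[u]∪N[v]|,t)/C(n,t). Then the domination number γ(G) satisfies γ(G) ≤ min over t ∈ {1,…,n−δ} of [a(G,t) − (b(G,t) − (a(G,t)−t)^2)/(n − a(G,t))]. -/
open Finset

/-- `D` is a dominating set of `G`: `N[u] ∩ D ≠ ∅` for every vertex `u`. -/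
def IsDomSet {V : Type*} (G : SimpleGraph V) (D : Finset V) : Prop :=
  ∀ u : V, ∃ v ∈ D, v = u ∨ G.Adj u v

/-- The domination number of `G`: the minimum cardinality of a dominating set. -/
noncomputable def domNum {V : Type*} [Fintype V] (G : SimpleGraph V) : ℕ :=
  sInf {k | ∃ D : Finset V, IsDomSet G D ∧ D.card = k}

private lemma count_disjoint {V : Type*} [Fintype V] [DecidableEq V] (t : ℕ) (A : Finset V) :
    (((univ : Finset V).powersetCard t).filter (fun T => Disjoint T A)).card
      = (Fintype.card V - A.card).choose t := by
  have h : ((univ : Finset V).powersetCard t).filter (fun T => Disjoint T A)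
      = ((univ : Finset V) \ A).powersetCard t := by
    ext T
    simp only [mem_filter, mem_powersetCard, subset_sdiff]
    tauto
  rw [h, card_powersetCard, card_sdiff_of_subset (subset_univ A), card_univ]

set_option maxHeartbeats 1000000 in
/-- Theorem 1 (Harant–Mohr): for `G ∈ Γ_n` and every `t ∈ [n − δ]`,
`γ(G) ≤ a(G,t) − (b(G,t) − (a(G,t) − t)²)/(n − a(G,t))`, where
`a(G,t) = t + Σ_u C(n−d(u)−1,t)/C(n,t)` and
`b(G,t) = Σ_u C(n−d(u)−1,t)/C(n,t) + 2 Σ_{{u,v}} C(n−|N[u]∪N[v]|,t)/C(n,t)`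
(the unordered pair sum with factor 2 is written as a sum over ordered distinct pairs).
Hence `γ(G) ≤ γ_HM1(G)`, the minimum of the right-hand side over `t`. -/
theorem domination_bound_HM1 {V : Type*} [Fintype V] [DecidableEq V]
    (G : SimpleGraph V) [DecidableRel G.Adj]
    (hconn : G.Connected) (hnc : G ≠ ⊤)
    (t : ℕ) (ht1 : 1 ≤ t) (ht2 : t ≤ Fintype.card V - G.minDegree)
    (a b : ℝ)
    (ha : a = (t : ℝ) + ∑ u : V, ((Fintype.card V - G.degree u - 1).choose t : ℝ)
            / ((Fintype.card V).choose t : ℝ))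
    (hb : b = (∑ u : V, ((Fintype.card V - G.degree u - 1).choose t : ℝ)
            / ((Fintype.card V).choose t : ℝ))
        + ∑ p ∈ (univ : Finset V).offDiag,
            ((Fintype.card V -
                (insert p.1 (G.neighborFinset p.1) ∪ insert p.2 (G.neighborFinset p.2)).card).choose t : ℝ)
              / ((Fintype.card V).choose t : ℝ)) :
    (domNum G : ℝ) ≤ a - (b - (a - t) ^ 2) / ((Fintype.card V : ℝ) - a) := by
  classical
  have hne : Nonempty V := hconn.nonempty
  set n := Fintype.card V with hn
  have hn1 : 1 ≤ n := Fintype.card_pos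
  -- non-complete gives two non-adjacent distinct vertices
  have hex : ∃ u v : V, u ≠ v ∧ ¬ G.Adj u v := by
    by_contra h
    push_neg at h
    apply hnc
    ext u v
    simp only [SimpleGraph.top_adj]
    exact ⟨fun h' => h'.ne, fun h' => h u v h'⟩
  obtain ⟨w₁, w₂, hw, hwn⟩ := hex
  -- every vertex has positive degree
  have hdeg : ∀ v : V, 0 < G.degree v := by
    intro v
    rw [SimpleGraph.degree_pos_iff_exists_adj]
    have hexu : ∃ u : V, u ≠ v := by
      rcases eq_or_ne w₁ v with rfl | h
      · exact ⟨w₂, Ne.symm hw⟩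
      · exact ⟨w₁, h⟩
    obtain ⟨u, hu⟩ := hexu
    obtain ⟨p⟩ := hconn v u
    cases p with
    | nil => exact absurd rfl hu.symm
    | cons hadj q => exact ⟨_, hadj⟩
  have hδ : 1 ≤ G.minDegree := by
    obtain ⟨v, hv⟩ := G.exists_minimal_degree_vertex
    rw [hv]; exact hdeg v
  have htn : t < n := by omega
  -- the sample space: t-subsets of V
  set S := (univ : Finset V).powersetCard t with hS
  set X : Finset V → Finset V :=
    (fun T => univ.filter (fun u => Disjoint T (insert u (G.neighborFinset u)))) with hX
  have hcardS : S.card = n.choose t := by rw [hS, card_powersetCard, card_univ]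
  have hchoose : 0 < n.choose t := Nat.choose_pos htn.le
  have hdisjX : ∀ T : Finset V, Disjoint T (X T) := by
    intro T
    rw [Finset.disjoint_left]
    intro u huT huX
    have hd := (mem_filter.mp huX).2
    exact (Finset.disjoint_left.mp hd huT) (mem_insert_self u _)
  -- γ ≤ t + |X T|
  have hdom : ∀ T ∈ S, domNum G ≤ t + (X T).card := by
    intro T hT
    have hTcard : T.card = t := (mem_powersetCard.mp hT).2
    have hds : IsDomSet G (T ∪ X T) := by
      intro u
      by_cases hu : u ∈ X T
      · exact ⟨u, mem_union_right _ hu, Or.inl rfl⟩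
      · have h1 : ¬ Disjoint T (insert u (G.neighborFinset u)) := by
          intro hd
          exact hu (mem_filter.mpr ⟨mem_univ u, hd⟩)
        rw [Finset.not_disjoint_iff] at h1
        obtain ⟨v, hvT, hvN⟩ := h1
        refine ⟨v, mem_union_left _ hvT, ?_⟩
        rcases mem_insert.mp hvN with h | h
        · exact Or.inl h
        · exact Or.inr ((SimpleGraph.mem_neighborFinset _ _ _).mp h)
    calc domNum G ≤ (T ∪ X T).card := Nat.sInf_le ⟨T ∪ X T, hds, rfl⟩
      _ = t + (X T).card := by rw [card_union_of_disjoint (hdisjX T), hTcard]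
  -- t + |X T| ≤ n - 1
  have hup : ∀ T ∈ S, t + (X T).card + 1 ≤ n := by
    intro T hT
    have hTcard : T.card = t := (mem_powersetCard.mp hT).2
    have hTne : T.Nonempty := card_pos.mp (by omega)
    obtain ⟨v, hv⟩ := hTne
    have hTnu : T ≠ univ := by
      intro h; rw [h, card_univ] at hTcard; omega
    have hexw : ∃ w, w ∉ T := by
      by_contra h; push_neg at h
      exact hTnu (eq_univ_iff_forall.mpr h)
    obtain ⟨w, hw'⟩ := hexw
    obtain ⟨p⟩ := hconn v w
    obtain ⟨d, _, hd1, hd2⟩ := p.exists_boundary_dart (↑T : Set V) hv hw'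
    have hd1' : d.fst ∈ T := hd1
    have hd2' : d.snd ∉ T := hd2
    have hnd : d.snd ∉ X T := by
      intro h
      have hdj := (mem_filter.mp h).2
      have hmem : d.fst ∈ insert d.snd (G.neighborFinset d.snd) :=
        mem_insert_of_mem ((SimpleGraph.mem_neighborFinset _ _ _).mpr d.adj.symm)
      exact (Finset.disjoint_left.mp hdj hd1') hmem
    have hss : T ∪ X T ⊂ univ := by
      rw [Finset.ssubset_univ_iff]
      intro h
      have hmem : d.snd ∈ T ∪ X T := h ▸ mem_univ _
      rcases mem_union.mp hmem with h' | h'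
      · exact hd2' h'
      · exact hnd h'
    have hlt := Finset.card_lt_card hss
    rw [card_union_of_disjoint (hdisjX T), hTcard, card_univ] at hlt
    omega
  -- first moment
  have hsum1 : ∑ T ∈ S, (X T).card = ∑ u : V, (n - G.degree u - 1).choose t := by
    calc ∑ T ∈ S, (X T).card
        = ∑ T ∈ S, ∑ u : V, (if Disjoint T (insert u (G.neighborFinset u)) then 1 else 0) := by
          refine sum_congr rfl fun T _ => ?_
          rw [hX]; exact card_filter _ _
      _ = ∑ u : V, ∑ T ∈ S, (if Disjoint T (insert u (G.neighborFinset u)) then 1 else 0) :=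
          sum_comm
      _ = ∑ u : V, (S.filter (fun T => Disjoint T (insert u (G.neighborFinset u)))).card := by
          exact sum_congr rfl fun u _ => (card_filter _ _).symm
      _ = ∑ u : V, (n - G.degree u - 1).choose t := by
          refine sum_congr rfl fun u _ => ?_
          rw [hS, count_disjoint]
          congr 1
          rw [card_insert_of_notMem (by simp), SimpleGraph.card_neighborFinset_eq_degree]
          omega
  -- second moment
  have hsum2 : ∑ T ∈ S, (X T).card ^ 2
      = (∑ T ∈ S, (X T).card) + ∑ p ∈ (univ : Finset V).offDiag,
          (n - (insert p.1 (G.neighborFinset p.1) ∪ insert p.2 (G.neighborFinset p.2)).card).choose t := by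
    have hpt : ∀ T ∈ S, (X T).card ^ 2 = (X T).card + ∑ p ∈ (univ : Finset V).offDiag,
        (if Disjoint T (insert p.1 (G.neighborFinset p.1) ∪ insert p.2 (G.neighborFinset p.2))
          then 1 else 0) := by
      intro T _
      have h1 : (univ : Finset V).offDiag.filter
          (fun p => Disjoint T (insert p.1 (G.neighborFinset p.1) ∪ insert p.2 (G.neighborFinset p.2)))
          = (X T).offDiag := by
        ext p
        simp only [mem_filter, mem_offDiag, mem_univ, true_and, hX,
          Finset.disjoint_union_right]
        tauto
      rw [← card_filter, h1, Finset.offDiag_card]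
      have hle : (X T).card ≤ (X T).card ^ 2 := Nat.le_self_pow two_ne_zero _
      rw [pow_two] at hle ⊢
      omega
    calc ∑ T ∈ S, (X T).card ^ 2
        = ∑ T ∈ S, ((X T).card + ∑ p ∈ (univ : Finset V).offDiag,
            (if Disjoint T (insert p.1 (G.neighborFinset p.1) ∪ insert p.2 (G.neighborFinset p.2))
              then 1 else 0)) := sum_congr rfl hpt
      _ = (∑ T ∈ S, (X T).card) + ∑ T ∈ S, ∑ p ∈ (univ : Finset V).offDiag,
            (if Disjoint T (insert p.1 (G.neighborFinset p.1) ∪ insert p.2 (G.neighborFinset p.2))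
              then 1 else 0) := sum_add_distrib
      _ = (∑ T ∈ S, (X T).card) + ∑ p ∈ (univ : Finset V).offDiag,
            (n - (insert p.1 (G.neighborFinset p.1) ∪ insert p.2 (G.neighborFinset p.2)).card).choose t := by
          congr 1
          rw [sum_comm]
          refine sum_congr rfl fun p _ => ?_
          rw [← card_filter, hS, count_disjoint]
  -- pass to the reals
  set c : ℝ := (n.choose t : ℝ) with hc'
  have hc : (0:ℝ) < c := by rw [hc']; exact_mod_cast hchoose
  set A1 : ℝ := ∑ u : V, ((n - G.degree u - 1).choose t : ℝ) with hA1'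
  set A2 : ℝ := ∑ p ∈ (univ : Finset V).offDiag,
      ((n - (insert p.1 (G.neighborFinset p.1) ∪ insert p.2 (G.neighborFinset p.2)).card).choose t : ℝ)
      with hA2'
  have ha' : a = t + A1 / c := by
    rw [ha, hA1', sum_div]
  have hb' : b = (A1 + A2) / c := by
    rw [hb, hA1', hA2', add_div, sum_div, sum_div]
  have hX1 : ∑ T ∈ S, ((X T).card : ℝ) = A1 := by
    rw [hA1']
    exact_mod_cast congrArg (Nat.cast : ℕ → ℝ) hsum1
  have hX2 : ∑ T ∈ S, ((X T).card : ℝ) ^ 2 = A1 + A2 := by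
    have := congrArg (Nat.cast : ℕ → ℝ) hsum2
    push_cast at this
    rw [this, hX1, hA2']
  set γ : ℝ := (domNum G : ℝ) with hγ'
  have hSY : ∑ T ∈ S, ((t : ℝ) + ((X T).card : ℝ)) = c * t + A1 := by
    rw [sum_add_distrib, hX1, sum_const, hcardS, nsmul_eq_mul]
  have hSY2 : ∑ T ∈ S, ((t : ℝ) + ((X T).card : ℝ)) ^ 2 = c * t ^ 2 + 2 * t * A1 + (A1 + A2) := by
    have e : ∀ T ∈ S, ((t : ℝ) + ((X T).card : ℝ)) ^ 2
        = (t : ℝ) ^ 2 + 2 * t * ((X T).card : ℝ) + ((X T).card : ℝ) ^ 2 := fun T _ => by ring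
    rw [sum_congr rfl e, sum_add_distrib, sum_add_distrib, sum_const, hcardS, nsmul_eq_mul,
      ← mul_sum, hX1, hX2]
  have hkey : (0:ℝ) ≤ ∑ T ∈ S, (((t : ℝ) + ((X T).card : ℝ)) - γ) * ((n : ℝ) - ((t : ℝ) + ((X T).card : ℝ))) := by
    refine sum_nonneg fun T hT => mul_nonneg ?_ ?_
    · have h := hdom T hT
      have : γ ≤ ((t + (X T).card : ℕ) : ℝ) := by rw [hγ']; exact_mod_cast h
      push_cast at this
      linarith
    · have h := hup T hT
      have : ((t + (X T).card + 1 : ℕ) : ℝ) ≤ (n : ℝ) := by exact_mod_cast h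
      push_cast at this
      linarith
  have hexp : ∑ T ∈ S, (((t : ℝ) + ((X T).card : ℝ)) - γ) * ((n : ℝ) - ((t : ℝ) + ((X T).card : ℝ)))
      = ((n : ℝ) + γ) * (c * t + A1) - (c * t ^ 2 + 2 * t * A1 + (A1 + A2)) - γ * n * c := by
    have e : ∀ T ∈ S, (((t : ℝ) + ((X T).card : ℝ)) - γ) * ((n : ℝ) - ((t : ℝ) + ((X T).card : ℝ)))
        = ((n : ℝ) + γ) * ((t : ℝ) + ((X T).card : ℝ)) - ((t : ℝ) + ((X T).card : ℝ)) ^ 2 - γ * n :=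
      fun T _ => by ring
    rw [sum_congr rfl e, sum_sub_distrib, sum_sub_distrib, ← mul_sum, hSY, hSY2, sum_const,
      hcardS, nsmul_eq_mul]
    ring
  -- a ≤ n - 1
  have hale : a ≤ (n : ℝ) - 1 := by
    have hptw : ∀ T ∈ S, ((t : ℝ) + ((X T).card : ℝ)) ≤ (n : ℝ) - 1 := by
      intro T hT
      have h := hup T hT
      have : ((t + (X T).card + 1 : ℕ) : ℝ) ≤ (n : ℝ) := by exact_mod_cast h
      push_cast at this
      linarith
    have hsle : c * t + A1 ≤ ((n : ℝ) - 1) * c := by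
      calc c * t + A1 = ∑ T ∈ S, ((t : ℝ) + ((X T).card : ℝ)) := hSY.symm
        _ ≤ ∑ T ∈ S, ((n : ℝ) - 1) := sum_le_sum hptw
        _ = ((n : ℝ) - 1) * c := by rw [sum_const, hcardS, nsmul_eq_mul]; ring
    rw [ha']
    have h4 : A1 / c ≤ ((n:ℝ) - 1) - t := by
      rw [div_le_iff₀ hc]
      nlinarith [hsle]
    linarith
  have hna : (0:ℝ) < (n : ℝ) - a := by linarith
  -- substitute
  have hA1eq : A1 = c * (a - t) := by
    rw [ha']
    field_simp
    ring
  have hAbeq : A1 + A2 = c * b := by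
    rw [hb']
    field_simp
  have h1 : (0:ℝ) ≤ ((n : ℝ) + γ) * (c * t + A1) - (c * t ^ 2 + 2 * t * A1 + (A1 + A2)) - γ * n * c := by
    rw [← hexp]; exact hkey
  have h2 : (0:ℝ) ≤ c * (((n : ℝ) + γ) * a + (t:ℝ) ^ 2 - 2 * t * a - b - γ * n) := by
    have e : c * (((n : ℝ) + γ) * a + (t:ℝ) ^ 2 - 2 * t * a - b - γ * n)
        = ((n : ℝ) + γ) * (c * t + c * (a - t)) - (c * t ^ 2 + 2 * t * (c * (a - t)) + c * b)
          - γ * n * c := by ring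
    rw [e, ← hA1eq, ← hAbeq]
    exact h1
  have h3 : (0:ℝ) ≤ ((n : ℝ) + γ) * a + (t:ℝ) ^ 2 - 2 * t * a - b - γ * n :=
    nonneg_of_mul_nonneg_right h2 hc
  have hfin : b - (a - t) ^ 2 ≤ (a - γ) * ((n : ℝ) - a) := by nlinarith [h3]
  have hdiv : (b - (a - t) ^ 2) / ((n : ℝ) - a) ≤ a - γ := by
    rw [div_le_iff₀ hna]
    linarith
  linarith
end

section
/- Let G be a finite, simple, connected, non-complete graph on n vertices with minimum degree δ. For t with 2 ≤ t ≤ n−δ, let a(G,t) = Σ_{u∈V} C(n−d(u)−1, t−1) and b(G,t) = 2 Σ over non-adjacent pairs {u,v} of [C(n−d(u)−1, t−2) + C(n−d(v)−1, t−2) − C(n−|N[u]∪N[v]|, t−2)]. Then the independence number α(G) satisfies α(G) ≥ 2t − 1 − b(G,t)/a(G,t). -/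
open Finset

/-- `I` is an independent set of `G`. -/
def IsIndepFinset {V : Type*} (G : SimpleGraph V) (I : Finset V) : Prop :=
  ∀ u ∈ I, ∀ v ∈ I, ¬ G.Adj u v

/-- The independence number of `G`: the maximum cardinality of an independent set. -/
noncomputable def indepNum {V : Type*} [Fintype V] (G : SimpleGraph V) : ℕ :=
  sSup {k | ∃ I : Finset V, IsIndepFinset G I ∧ I.card = k}

section HMaux
variable {V : Type*} [Fintype V] [DecidableEq V] (G : SimpleGraph V) [DecidableRel G.Adj]

/-- closed neighborhood -/
def HMNc (u : V) : Finset V := insert u (G.neighborFinset u)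

lemma HM_mem_compl {u v : V} : v ∈ (univ \ HMNc G u) ↔ v ≠ u ∧ ¬ G.Adj u v := by
  simp [HMNc]

lemma HM_card_Nc (u : V) : (HMNc G u).card = G.degree u + 1 := by
  rw [HMNc, card_insert_of_notMem (by simp), G.card_neighborFinset_eq_degree]

lemma HM_card_compl (u : V) :
    (univ \ HMNc G u).card = Fintype.card V - G.degree u - 1 := by
  rw [card_sdiff_of_subset (subset_univ _), HM_card_Nc, card_univ, Nat.sub_sub]

def HMcfg (t : ℕ) : Finset (Σ _ : V, Finset V) :=
  univ.sigma fun u => (univ \ HMNc G u).powersetCard (t - 1)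

def HMtrs (t : ℕ) : Finset (Σ _ : V × V, Finset V) :=
  (univ.offDiag.filter fun p => ¬ G.Adj p.1 p.2).sigma fun p =>
    (univ \ HMNc G p.1).powersetCard (t - 2) ∪ (univ \ HMNc G p.2).powersetCard (t - 2)

def HMbad (c : Σ _ : V, Finset V) : Finset V :=
  c.2.filter fun w => ∃ z ∈ insert c.1 c.2, G.Adj w z

def HMR (c : Σ _ : V, Finset V) : Finset (Σ _ : V × V, Finset V) :=
  (c.2.image fun v => ⟨(c.1, v), c.2.erase v⟩) ∪
    ((HMbad G c).image fun w => ⟨(w, c.1), c.2.erase w⟩)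

variable {G}

lemma HM_mem_cfg {t : ℕ} {c : Σ _ : V, Finset V} (hc : c ∈ HMcfg G t) :
    c.2 ⊆ univ \ HMNc G c.1 ∧ c.2.card = t - 1 := by
  obtain ⟨u, S⟩ := c
  simpa [HMcfg, mem_powersetCard] using hc

lemma HM_fst_notMem {t : ℕ} {c : Σ _ : V, Finset V} (hc : c ∈ HMcfg G t) :
    c.1 ∉ c.2 := by
  intro h
  have := (HM_mem_cfg hc).1 h
  simp [HMNc] at this

end HMaux

section HMaux2
variable {V : Type*} [Fintype V] [DecidableEq V] {G : SimpleGraph V} [DecidableRel G.Adj]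

lemma HM_bad_subset (c : Σ _ : V, Finset V) : HMbad G c ⊆ c.2 := filter_subset _ _

lemma HM_card_R {t : ℕ} {c : Σ _ : V, Finset V} (hc : c ∈ HMcfg G t) :
    (HMR G c).card = (t - 1) + (HMbad G c).card := by
  obtain ⟨hsub, hcard⟩ := HM_mem_cfg hc
  have h1 : (c.2.image fun v => (⟨(c.1, v), c.2.erase v⟩ : Σ _ : V × V, Finset V)).card
      = t - 1 := by
    rw [card_image_of_injective _ (fun x y h => by simpa using (congrArg (fun τ => τ.1.2) h)),
      hcard]
  have h2 : ((HMbad G c).image fun w => (⟨(w, c.1), c.2.erase w⟩ : Σ _ : V × V, Finset V)).card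
      = (HMbad G c).card :=
    card_image_of_injective _ (fun x y h => by simpa using (congrArg (fun τ => τ.1.1) h))
  have hdisj : Disjoint (c.2.image fun v => (⟨(c.1, v), c.2.erase v⟩ : Σ _ : V × V, Finset V))
      ((HMbad G c).image fun w => (⟨(w, c.1), c.2.erase w⟩ : Σ _ : V × V, Finset V)) := by
    rw [disjoint_left]
    rintro τ hτ1 hτ2
    simp only [mem_image] at hτ1 hτ2
    obtain ⟨v, hv, rfl⟩ := hτ1
    obtain ⟨w, hw, heq⟩ := hτ2
    have : w = c.1 := by simpa using congrArg (fun τ => τ.1.1) heq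
    exact HM_fst_notMem hc (this ▸ HM_bad_subset c hw)
  rw [HMR, card_union_of_disjoint hdisj, h1, h2]

end HMaux2

set_option linter.unusedSectionVars false
section HMaux3
variable {V : Type*} [Fintype V] [DecidableEq V] {G : SimpleGraph V} [DecidableRel G.Adj]

lemma HM_R_subset_trs {t : ℕ} (ht : 2 ≤ t) {c : Σ _ : V, Finset V} (hc : c ∈ HMcfg G t) :
    HMR G c ⊆ HMtrs G t := by
  obtain ⟨hsub, hcard⟩ := HM_mem_cfg hc
  intro τ hτ
  simp only [HMR, mem_union, mem_image] at hτ
  have hcarde : ∀ x ∈ c.2, (c.2.erase x).card = t - 2 := by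
    intro x hx
    rw [card_erase_of_mem hx, hcard]
    omega
  rcases hτ with ⟨v, hv, rfl⟩ | ⟨w, hw, rfl⟩
  · have hvc := (HM_mem_compl G).1 (hsub hv)
    simp only [HMtrs, mem_sigma, mem_filter, mem_offDiag, mem_union, mem_powersetCard]
    refine ⟨⟨⟨mem_univ _, mem_univ _, fun h => hvc.1 h.symm⟩, hvc.2⟩, Or.inl
      ⟨(erase_subset _ _).trans hsub, hcarde v hv⟩⟩
  · have hwS := HM_bad_subset c hw
    have hwc := (HM_mem_compl G).1 (hsub hwS)
    simp only [HMtrs, mem_sigma, mem_filter, mem_offDiag, mem_union, mem_powersetCard]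
    refine ⟨⟨⟨mem_univ _, mem_univ _, hwc.1⟩, fun h => hwc.2 h.symm⟩, Or.inr
      ⟨(erase_subset _ _).trans hsub, hcarde w hwS⟩⟩

/-- decode a triple back to its config -/
def HMdec (G : SimpleGraph V) [DecidableRel G.Adj] (τ : Σ _ : V × V, Finset V) :
    Σ _ : V, Finset V :=
  if τ.2 ⊆ univ \ HMNc G τ.1.1 then ⟨τ.1.1, insert τ.1.2 τ.2⟩ else ⟨τ.1.2, insert τ.1.1 τ.2⟩

lemma HM_recover {t : ℕ} {c : Σ _ : V, Finset V} (hc : c ∈ HMcfg G t)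
    {τ : Σ _ : V × V, Finset V} (hτ : τ ∈ HMR G c) : HMdec G τ = c := by
  obtain ⟨hsub, hcard⟩ := HM_mem_cfg hc
  simp only [HMR, mem_union, mem_image] at hτ
  rcases hτ with ⟨v, hv, rfl⟩ | ⟨w, hw, rfl⟩
  · rw [HMdec, if_pos ((erase_subset _ _).trans hsub)]
    simp only
    rw [insert_erase hv]
  · obtain ⟨hwS, z, hz, hadj⟩ := mem_filter.1 hw
    have hzw : z ≠ w := fun h => G.irrefl (h ▸ hadj)
    have hz1 : z ≠ c.1 := by
      rintro rfl
      exact ((HM_mem_compl G).1 (hsub hwS)).2 hadj.symm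
    have hzmem : z ∈ c.2.erase w := mem_erase.2 ⟨hzw, by
      rcases mem_insert.1 hz with h | h
      · exact absurd h hz1
      · exact h⟩
    rw [HMdec, if_neg]
    · simp only
      rw [insert_erase hwS]
    · intro hss
      exact ((HM_mem_compl G).1 (hss hzmem)).2 hadj

lemma HM_R_disjoint {t : ℕ} {c c' : Σ _ : V, Finset V} (hc : c ∈ HMcfg G t)
    (hc' : c' ∈ HMcfg G t) (hne : c ≠ c') : Disjoint (HMR G c) (HMR G c') := by
  rw [disjoint_left]
  intro τ h1 h2
  exact hne ((HM_recover hc h1).symm.trans (HM_recover hc' h2))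

end HMaux3

section HMaux4
variable {V : Type*} [Fintype V] [DecidableEq V] {G : SimpleGraph V} [DecidableRel G.Adj]

lemma HM_card_cfg (t : ℕ) :
    (HMcfg G t).card = ∑ u : V, (Fintype.card V - G.degree u - 1).choose (t - 1) := by
  rw [HMcfg, card_sigma]
  exact Finset.sum_congr rfl fun u _ => by rw [card_powersetCard, HM_card_compl]

lemma HM_powersetCard_inter (s t : Finset V) (k : ℕ) :
    s.powersetCard k ∩ t.powersetCard k = (s ∩ t).powersetCard k := by
  ext x; simp [mem_powersetCard, subset_inter_iff]; tauto

lemma HM_card_trs (t : ℕ) :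
    ((HMtrs G t).card : ℝ)
      = ∑ p ∈ ((univ : Finset V).offDiag.filter (fun p => ¬ G.Adj p.1 p.2)),
        (((Fintype.card V - G.degree p.1 - 1).choose (t - 2) : ℝ)
          + ((Fintype.card V - G.degree p.2 - 1).choose (t - 2) : ℝ)
          - ((Fintype.card V - (HMNc G p.1 ∪ HMNc G p.2).card).choose (t - 2) : ℝ)) := by
  rw [HMtrs, card_sigma, Nat.cast_sum]
  refine Finset.sum_congr rfl fun p _ => ?_
  have hinter : (univ \ HMNc G p.1).powersetCard (t - 2) ∩ (univ \ HMNc G p.2).powersetCard (t - 2)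
      = (univ \ (HMNc G p.1 ∪ HMNc G p.2)).powersetCard (t - 2) := by
    rw [HM_powersetCard_inter, sdiff_union_distrib]
  have key := card_union_add_card_inter ((univ \ HMNc G p.1).powersetCard (t - 2))
    ((univ \ HMNc G p.2).powersetCard (t - 2))
  rw [hinter, card_powersetCard, card_powersetCard, card_powersetCard, HM_card_compl,
    HM_card_compl, card_sdiff_of_subset (subset_univ _), card_univ] at key
  have := congrArg (fun n : ℕ => (n : ℝ)) key
  push_cast at this
  linarith

lemma HM_indep_of_cfg {t : ℕ} (ht : 2 ≤ t) {c : Σ _ : V, Finset V} (hc : c ∈ HMcfg G t) :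
    ∃ I : Finset V, IsIndepFinset G I ∧ I.card + (HMbad G c).card = t := by
  obtain ⟨hsub, hcard⟩ := HM_mem_cfg hc
  refine ⟨insert c.1 c.2 \ HMbad G c, ?_, ?_⟩
  · intro x hx y hy hadj
    rcases mem_sdiff.1 hx with ⟨hxT, hxb⟩
    rcases mem_sdiff.1 hy with ⟨hyT, _⟩
    rcases mem_insert.1 hxT with rfl | hxS
    · rcases mem_insert.1 hyT with rfl | hyS
      · exact G.irrefl hadj
      · exact ((HM_mem_compl G).1 (hsub hyS)).2 hadj
    · exact hxb (mem_filter.2 ⟨hxS, y, hyT, hadj⟩)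
  · have hbT : HMbad G c ⊆ insert c.1 c.2 :=
      (HM_bad_subset c).trans (subset_insert _ _)
    have hT : (insert c.1 c.2).card = t := by
      rw [card_insert_of_notMem (HM_fst_notMem hc), hcard]
      omega
    have hble : (HMbad G c).card ≤ t := hT ▸ card_le_card hbT
    rw [card_sdiff_of_subset hbT, hT]
    omega

lemma HM_le_indepNum {I : Finset V} (hI : IsIndepFinset G I) : I.card ≤ indepNum G := by
  apply le_csSup
  · exact ⟨Fintype.card V, fun k ⟨J, _, hJ⟩ => hJ ▸ card_le_univ J⟩
  · exact ⟨I, hI, rfl⟩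

end HMaux4
/-- Theorem 3 (Harant–Mohr): for `G ∈ Γ_n` and `2 ≤ t ≤ n − δ`, with
`a(G,t) = Σ_u C(n−d(u)−1, t−1)` and
`b(G,t) = 2 Σ_{{u,v} non-adjacent} [C(n−d(u)−1,t−2) + C(n−d(v)−1,t−2) − C(n−|N[u]∪N[v]|,t−2)]`
(the unordered pair sum with factor 2 written as a sum over ordered distinct
non-adjacent pairs), one has `α(G) ≥ 2t − 1 − b(G,t)/a(G,t)`. -/
theorem independence_bound_HM {V : Type*} [Fintype V] [DecidableEq V]
    (G : SimpleGraph V) [DecidableRel G.Adj]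
    (hconn : G.Connected) (hnc : G ≠ ⊤)
    (t : ℕ) (ht1 : 2 ≤ t) (ht2 : t ≤ Fintype.card V - G.minDegree)
    (a b : ℝ)
    (ha : a = ∑ u : V, ((Fintype.card V - G.degree u - 1).choose (t - 1) : ℝ))
    (hb : b = ∑ p ∈ ((univ : Finset V).offDiag.filter (fun p => ¬ G.Adj p.1 p.2)),
        (((Fintype.card V - G.degree p.1 - 1).choose (t - 2) : ℝ)
          + ((Fintype.card V - G.degree p.2 - 1).choose (t - 2) : ℝ)
          - ((Fintype.card V -
              (insert p.1 (G.neighborFinset p.1) ∪ insert p.2 (G.neighborFinset p.2)).card).choose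
                (t - 2) : ℝ))) :
    2 * (t : ℝ) - 1 - b / a ≤ (indepNum G : ℝ) := by

  classical
  have hV : Nonempty V := hconn.nonempty
  set α : ℝ := (indepNum G : ℝ) with hα
  -- identify a and b with cardinalities
  have haN : ((HMcfg G t).card : ℝ) = a := by
    rw [ha, HM_card_cfg]; push_cast; rfl
  have hbN : ((HMtrs G t).card : ℝ) = b := by
    rw [hb, HM_card_trs]; simp only [HMNc]
  -- a is positive
  obtain ⟨u0, hu0⟩ := G.exists_minimal_degree_vertex
  have hd : G.degree u0 < Fintype.card V := G.degree_lt_card_verts u0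
  have htle : t - 1 ≤ Fintype.card V - G.degree u0 - 1 := by
    rw [← hu0] at hd ⊢; omega
  have hapos : 0 < a := by
    rw [ha]
    have h1 : (0:ℝ) < ((Fintype.card V - G.degree u0 - 1).choose (t - 1) : ℝ) := by
      exact_mod_cast Nat.choose_pos htle
    have h2 : ∀ u ∈ (univ : Finset V), (0:ℝ)
        ≤ ((Fintype.card V - G.degree u - 1).choose (t - 1) : ℝ) :=
      fun u _ => by positivity
    exact lt_of_lt_of_le h1 (Finset.single_le_sum h2 (mem_univ u0))
  -- per-configuration bound
  have key : ∀ c ∈ HMcfg G t,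
      2 * (t : ℝ) - 1 - α ≤ (((t - 1) + (HMbad G c).card : ℕ) : ℝ) := by
    intro c hc
    obtain ⟨I, hI, hIc⟩ := HM_indep_of_cfg ht1 hc
    have h1 : (I.card : ℝ) ≤ α := by rw [hα]; exact_mod_cast HM_le_indepNum hI
    have h2 : (I.card : ℝ) + ((HMbad G c).card : ℝ) = t := by exact_mod_cast hIc
    have h3 : (((t - 1) + (HMbad G c).card : ℕ) : ℝ)
        = (t : ℝ) - 1 + ((HMbad G c).card : ℝ) := by
      push_cast [Nat.cast_sub (by omega : 1 ≤ t)]; ring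
    linarith
  -- counting inequality
  have hsum : ∑ c ∈ HMcfg G t, ((t - 1) + (HMbad G c).card) ≤ (HMtrs G t).card := by
    calc ∑ c ∈ HMcfg G t, ((t - 1) + (HMbad G c).card)
        = ∑ c ∈ HMcfg G t, (HMR G c).card :=
          Finset.sum_congr rfl fun c hc => (HM_card_R hc).symm
      _ = ((HMcfg G t).biUnion (HMR G)).card :=
          (card_biUnion fun x hx y hy hxy => HM_R_disjoint hx hy hxy).symm
      _ ≤ (HMtrs G t).card :=
          card_le_card (biUnion_subset.2 fun c hc => HM_R_subset_trs ht1 hc)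
  have hfinal : a * (2 * (t : ℝ) - 1 - α) ≤ b := by
    calc a * (2 * (t : ℝ) - 1 - α)
        = ∑ _c ∈ HMcfg G t, (2 * (t : ℝ) - 1 - α) := by
          rw [Finset.sum_const, ← haN, nsmul_eq_mul]
      _ ≤ ∑ c ∈ HMcfg G t, (((t - 1) + (HMbad G c).card : ℕ) : ℝ) :=
          Finset.sum_le_sum key
      _ ≤ ((HMtrs G t).card : ℝ) := by exact_mod_cast hsum
      _ = b := hbN
  have hdiv : 2 * (t : ℝ) - 1 - α ≤ b / a := (le_div_iff₀ hapos).2 (by linarith)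
  linarith
end

section
/- For every finite, simple, connected, non-complete graph G, the Caro–Wei bound satisfies Σ_{u∈V} 1/(d(u)+1) > 1. -/
open Finset

/-- For every finite, simple, connected, non-complete graph `G`,
the Caro–Wei bound satisfies `Σ_u 1/(d(u)+1) > 1`. -/
theorem caro_wei_gt_one {V : Type*} [Fintype V] [DecidableEq V]
    (G : SimpleGraph V) [DecidableRel G.Adj]
    (hconn : G.Connected) (hnc : G ≠ ⊤) :
    1 < ∑ u : V, (1 : ℝ) / ((G.degree u : ℝ) + 1) := by
  obtain ⟨u, v, huv, hadj⟩ : ∃ u v, u ≠ v ∧ ¬ G.Adj u v := by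
    by_contra h
    push_neg at h
    apply hnc
    ext a b
    simp only [SimpleGraph.top_adj]
    exact ⟨fun h' => h'.ne, fun hne => h a b hne⟩
  set n := Fintype.card V with hn
  have hn2 : 2 ≤ n := Fintype.one_lt_card_iff.mpr ⟨u, v, huv⟩
  have hdu : G.degree u + 2 ≤ n := by
    have hsub : G.neighborFinset u ⊆ univ \ {u, v} := by
      intro w hw
      rw [SimpleGraph.mem_neighborFinset] at hw
      simp only [mem_sdiff, mem_univ, mem_insert, mem_singleton, true_and]
      push_neg
      refine ⟨fun h => G.irrefl (h ▸ hw), fun h => hadj (h ▸ hw)⟩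
    have hcard := Finset.card_le_card hsub
    rw [Finset.card_sdiff_of_subset (by simp)] at hcard
    have h2 : ({u, v} : Finset V).card = 2 := Finset.card_pair huv
    rw [h2, Finset.card_univ] at hcard
    have hdeg : G.degree u = (G.neighborFinset u).card := rfl
    omega
  have hNpos : (0:ℝ) < n := by positivity
  have hN1 : (1:ℝ) ≤ (n:ℝ) - 1 := by
    have : (2:ℝ) ≤ n := by exact_mod_cast hn2
    linarith
  have h1 : ∀ w : V, (1:ℝ)/n ≤ 1 / ((G.degree w : ℝ) + 1) := by
    intro w
    apply one_div_le_one_div_of_le (by positivity)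
    have : G.degree w + 1 ≤ n := G.degree_lt_card_verts w
    exact_mod_cast this
  have h2 : (1:ℝ)/((n:ℝ)-1) ≤ 1 / ((G.degree u : ℝ) + 1) := by
    apply one_div_le_one_div_of_le (by positivity)
    have : ((G.degree u : ℝ) + 2) ≤ n := by exact_mod_cast hdu
    linarith
  have hsplit : ∑ w : V, (1:ℝ) / ((G.degree w : ℝ) + 1)
      = 1 / ((G.degree u : ℝ) + 1) + ∑ w ∈ univ.erase u, (1:ℝ) / ((G.degree w : ℝ) + 1) :=
    (Finset.add_sum_erase univ _ (mem_univ u)).symm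
  have hrest : ((n:ℝ) - 1) * (1/n) ≤ ∑ w ∈ univ.erase u, (1:ℝ) / ((G.degree w : ℝ) + 1) := by
    have := Finset.card_nsmul_le_sum (univ.erase u)
      (fun w => (1:ℝ) / ((G.degree w : ℝ) + 1)) (1/n) (fun w _ => h1 w)
    rw [Finset.card_erase_of_mem (mem_univ u), Finset.card_univ] at this
    have hcast : ((n - 1 : ℕ) : ℝ) = (n:ℝ) - 1 := by
      have : (1:ℕ) ≤ n := by omega
      push_cast [this]
      ring
    rwa [nsmul_eq_mul, hcast] at this
  rw [hsplit]
  have key : (1:ℝ) < 1/((n:ℝ)-1) + ((n:ℝ) - 1) * (1/n) := by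
    have hpos : (0:ℝ) < (n:ℝ) - 1 := by linarith
    have e : ((n:ℝ)-1)*(1/n) = 1 - 1/n := by field_simp
    have hlt : (1:ℝ)/n < 1/((n:ℝ)-1) := by
      apply one_div_lt_one_div_of_lt hpos
      linarith
    rw [e]
    linarith
  linarith
end

section
/- For every finite simple graph G, α(G) ≥ Σ_{u∈V} 1/(d(u)+1) + Σ_{u∈V} (1/(d(u)+1)) · max{ d(u)/(d(u)+1) − Σ_{v∈N(u)} 1/(d(v)+1), 0 }. -/
open Finset

section Counting

variable {V : Type*} [Fintype V] [DecidableEq V]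

private abbrev Ordn (V : Type*) [Fintype V] [DecidableEq V] := V ≃ Fin (Fintype.card V)

lemma sum_minEvent (W : Finset V) (hW : W.Nonempty) :
    ∑ w ∈ W, (univ.filter (fun ℓ : Ordn V => ∀ v ∈ W, v ≠ w → ℓ w < ℓ v)).card
      = Fintype.card (Ordn V) := by
  classical
  have hne : ∀ ℓ : Ordn V, (W.image ℓ).Nonempty := fun ℓ => hW.image ℓ
  set f : Ordn V → V := fun ℓ => ℓ.symm ((W.image ℓ).min' (hne ℓ)) with hf
  have hfval : ∀ ℓ : Ordn V, ℓ (f ℓ) = (W.image ℓ).min' (hne ℓ) := by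
    intro ℓ; simp [hf]
  have hfmem : ∀ ℓ, f ℓ ∈ W := by
    intro ℓ
    obtain ⟨a, ha, hae⟩ := Finset.mem_image.mp ((W.image ℓ).min'_mem (hne ℓ))
    have : f ℓ = a := by rw [hf]; simp [← hae]
    rwa [this]
  have hfle : ∀ (ℓ : Ordn V), ∀ v ∈ W, ℓ (f ℓ) ≤ ℓ v := by
    intro ℓ v hv
    rw [hfval]
    exact Finset.min'_le _ _ (Finset.mem_image_of_mem ℓ hv)
  have key : ∀ (ℓ : Ordn V) (w : V), w ∈ W →
      (f ℓ = w ↔ ∀ v ∈ W, v ≠ w → ℓ w < ℓ v) := by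
    intro ℓ w hw
    constructor
    · rintro rfl v hv hne'
      exact lt_of_le_of_ne (hfle ℓ v hv) (fun h => hne' (ℓ.injective h).symm)
    · intro h
      by_contra hne'
      have hlt := h (f ℓ) (hfmem ℓ) (fun hh => hne' hh)
      exact absurd (hfle ℓ w hw) (not_le.mpr hlt)
  have := Finset.card_eq_sum_card_fiberwise (f := f) (s := univ) (t := W)
    (fun x _ => hfmem x)
  rw [Finset.card_univ] at this
  rw [this]
  apply Finset.sum_congr rfl
  intro w hw
  congr 1
  ext ℓ
  simp only [Finset.mem_filter, Finset.mem_univ, true_and]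
  exact (key ℓ w hw).symm

end Counting

section Counting2

variable {V : Type*} [Fintype V] [DecidableEq V]

lemma minEvent_card_eq (W : Finset V) {w w' : V} (hw : w ∈ W) (hw' : w' ∈ W) :
    (univ.filter (fun ℓ : Ordn V => ∀ v ∈ W, v ≠ w → ℓ w < ℓ v)).card
      = (univ.filter (fun ℓ : Ordn V => ∀ v ∈ W, v ≠ w' → ℓ w' < ℓ v)).card := by
  classical
  rcases eq_or_ne w w' with rfl | hne
  · rfl
  apply Finset.card_bij' (fun ℓ _ => (Equiv.swap w w').trans ℓ)
    (fun ℓ _ => (Equiv.swap w w').trans ℓ)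
  · intro ℓ hℓ
    simp only [Finset.mem_filter, Finset.mem_univ, true_and] at hℓ ⊢
    intro v hv hvne
    rcases eq_or_ne v w with rfl | hvw
    · simp only [Equiv.trans_apply, Equiv.swap_apply_right, Equiv.swap_apply_left]
      exact hℓ w' hw' hne.symm
    · simp only [Equiv.trans_apply, Equiv.swap_apply_right,
        Equiv.swap_apply_of_ne_of_ne hvw hvne]
      exact hℓ v hv hvw
  · intro ℓ hℓ
    simp only [Finset.mem_filter, Finset.mem_univ, true_and] at hℓ ⊢
    intro v hv hvne
    rcases eq_or_ne v w' with rfl | hvw'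
    · simp only [Equiv.trans_apply, Equiv.swap_apply_left, Equiv.swap_apply_right]
      exact hℓ w hw hne
    · simp only [Equiv.trans_apply, Equiv.swap_apply_left,
        Equiv.swap_apply_of_ne_of_ne hvne hvw']
      exact hℓ v hv hvw'
  · intro ℓ _
    ext x
    simp [Equiv.swap_apply_self]
  · intro ℓ _
    ext x
    simp [Equiv.swap_apply_self]

lemma minEvent_count (W : Finset V) {u : V} (hu : u ∈ W) :
    W.card * (univ.filter (fun ℓ : Ordn V => ∀ v ∈ W, v ≠ u → ℓ u < ℓ v)).card
      = Fintype.card (Ordn V) := by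
  rw [← sum_minEvent W ⟨u, hu⟩]
  rw [Finset.sum_congr rfl (fun w hw => minEvent_card_eq W hw hu)]
  rw [Finset.sum_const, smul_eq_mul]

end Counting2

section CW

variable {V : Type*} [Fintype V] [DecidableEq V] (G : SimpleGraph V) [DecidableRel G.Adj]

lemma card_le_indepNum {I : Finset V} (h : IsIndepFinset G I) : I.card ≤ indepNum G := by
  apply le_csSup
  · refine ⟨Fintype.card V, ?_⟩
    rintro k ⟨J, -, rfl⟩
    simpa using J.card_le_univ
  · exact ⟨I, h, rfl⟩

/-- The Caro–Wei set relative to `A`. -/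
def cwSet (A : Finset V) (ℓ : Ordn V) : Finset V :=
  A.filter (fun u => ∀ v ∈ G.neighborFinset u ∩ A, ℓ u < ℓ v)

lemma cwSet_subset (A : Finset V) (ℓ : Ordn V) : cwSet G A ℓ ⊆ A := Finset.filter_subset _ _

lemma cwSet_indep (A : Finset V) (ℓ : Ordn V) : IsIndepFinset G (cwSet G A ℓ) := by
  intro u hu v hv hadj
  rw [cwSet, Finset.mem_filter] at hu hv
  rcases lt_trichotomy (ℓ u) (ℓ v) with h | h | h
  · exact absurd (hv.2 u (Finset.mem_inter.mpr ⟨(G.mem_neighborFinset v u).mpr hadj.symm, hu.1⟩))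
      (not_lt.mpr h.le)
  · exact hadj.ne (ℓ.injective h)
  · exact absurd (hu.2 v (Finset.mem_inter.mpr ⟨(G.mem_neighborFinset u v).mpr hadj, hv.1⟩))
      (not_lt.mpr h.le)

lemma cwSet_count (A : Finset V) {u : V} (hu : u ∈ A) :
    ((G.neighborFinset u ∩ A).card + 1)
      * (univ.filter (fun ℓ : Ordn V => ∀ v ∈ G.neighborFinset u ∩ A, ℓ u < ℓ v)).card
      = Fintype.card (Ordn V) := by
  have hnm : u ∉ G.neighborFinset u ∩ A := by
    intro h
    exact G.irrefl ((G.mem_neighborFinset u u).mp (Finset.mem_inter.mp h).1)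
  have hcard : (insert u (G.neighborFinset u ∩ A)).card = (G.neighborFinset u ∩ A).card + 1 :=
    Finset.card_insert_of_notMem hnm
  rw [← hcard]
  have hiff : ∀ ℓ : Ordn V,
      (∀ v ∈ G.neighborFinset u ∩ A, ℓ u < ℓ v)
        ↔ (∀ v ∈ insert u (G.neighborFinset u ∩ A), v ≠ u → ℓ u < ℓ v) := by
    intro ℓ
    constructor
    · intro h v hv hvne
      rcases Finset.mem_insert.mp hv with rfl | hv'
      · exact absurd rfl hvne
      · exact h v hv'
    · intro h v hv
      refine h v (Finset.mem_insert_of_mem hv) ?_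
      intro hh
      exact hnm (hh ▸ hv)
  rw [show (univ.filter (fun ℓ : Ordn V => ∀ v ∈ G.neighborFinset u ∩ A, ℓ u < ℓ v))
      = (univ.filter (fun ℓ : Ordn V =>
          ∀ v ∈ insert u (G.neighborFinset u ∩ A), v ≠ u → ℓ u < ℓ v)) from
    Finset.filter_congr (fun ℓ _ => by simpa using hiff ℓ)]
  exact minEvent_count _ (Finset.mem_insert_self u _)

end CW

section CW2

variable {V : Type*} [Fintype V] [DecidableEq V] (G : SimpleGraph V) [DecidableRel G.Adj]

lemma cw_count_ge (A : Finset V) {u : V} (hu : u ∈ A) :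
    (Fintype.card (Ordn V) : ℝ) / ((G.degree u : ℝ) + 1)
      ≤ ((univ.filter (fun ℓ : Ordn V => ∀ v ∈ G.neighborFinset u ∩ A, ℓ u < ℓ v)).card : ℝ) := by
  have hd : (0:ℝ) < (G.degree u : ℝ) + 1 := by positivity
  rw [div_le_iff₀ hd]
  have h1 := cwSet_count G A hu
  have h2 : (G.neighborFinset u ∩ A).card + 1 ≤ G.degree u + 1 := by
    have := Finset.card_le_card (Finset.inter_subset_left (s₁ := G.neighborFinset u) (s₂ := A))
    rw [G.card_neighborFinset_eq_degree] at this
    omega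
  have := Nat.mul_le_mul_right
    ((univ.filter (fun ℓ : Ordn V => ∀ v ∈ G.neighborFinset u ∩ A, ℓ u < ℓ v)).card) h2
  rw [h1] at this
  calc (Fintype.card (Ordn V) : ℝ)
      ≤ ((G.degree u + 1) * (univ.filter (fun ℓ : Ordn V =>
          ∀ v ∈ G.neighborFinset u ∩ A, ℓ u < ℓ v)).card : ℕ) := by exact_mod_cast this
    _ = _ := by push_cast; ring

lemma exists_cw_indep (A : Finset V) :
    ∃ T : Finset V, T ⊆ A ∧ IsIndepFinset G T ∧
      (∑ u ∈ A, (1:ℝ) / ((G.degree u : ℝ) + 1)) ≤ T.card := by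
  classical
  have hNpos : 0 < Fintype.card (Ordn V) :=
    Fintype.card_pos_iff.mpr ⟨Fintype.equivFin V⟩
  -- total count
  have hswap : ∑ ℓ : Ordn V, ((cwSet G A ℓ).card : ℝ)
      = ∑ u ∈ A, ((univ.filter (fun ℓ : Ordn V =>
          ∀ v ∈ G.neighborFinset u ∩ A, ℓ u < ℓ v)).card : ℝ) := by
    simp only [cwSet, Finset.card_filter]
    push_cast
    rw [Finset.sum_comm]
  have hlow : (Fintype.card (Ordn V) : ℝ) * (∑ u ∈ A, (1:ℝ) / ((G.degree u : ℝ) + 1))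
      ≤ ∑ ℓ : Ordn V, ((cwSet G A ℓ).card : ℝ) := by
    rw [hswap, Finset.mul_sum]
    apply Finset.sum_le_sum
    intro u hu
    have := cw_count_ge G A hu
    rw [div_eq_mul_inv, ← one_div] at this
    calc (Fintype.card (Ordn V) : ℝ) * (1 / ((G.degree u : ℝ) + 1))
        = (Fintype.card (Ordn V) : ℝ) / ((G.degree u : ℝ) + 1) := by ring
      _ ≤ _ := cw_count_ge G A hu
  by_contra hcon
  push_neg at hcon
  have hall : ∀ ℓ : Ordn V, ((cwSet G A ℓ).card : ℝ)
      < ∑ u ∈ A, (1:ℝ) / ((G.degree u : ℝ) + 1) := by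
    intro ℓ
    have := hcon (cwSet G A ℓ) (cwSet_subset G A ℓ) (cwSet_indep G A ℓ)
    linarith
  have : ∑ ℓ : Ordn V, ((cwSet G A ℓ).card : ℝ)
      < ∑ _ℓ : Ordn V, (∑ u ∈ A, (1:ℝ) / ((G.degree u : ℝ) + 1)) :=
    Finset.sum_lt_sum_of_nonempty (by
      have : Nonempty (Ordn V) := ⟨Fintype.equivFin V⟩
      exact univ_nonempty) (fun ℓ _ => hall ℓ)
  rw [Finset.sum_const, Finset.card_univ, nsmul_eq_mul] at this
  linarith

end CW2

/-- Selkow's bound. -/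
theorem selkow_bound {V : Type*} [Fintype V] [DecidableEq V]
    (G : SimpleGraph V) [DecidableRel G.Adj] :
    (∑ u : V, (1 : ℝ) / ((G.degree u : ℝ) + 1))
      + ∑ u : V, (1 : ℝ) / ((G.degree u : ℝ) + 1)
          * max ((G.degree u : ℝ) / ((G.degree u : ℝ) + 1)
              - ∑ v ∈ G.neighborFinset u, (1 : ℝ) / ((G.degree v : ℝ) + 1)) 0
      ≤ (indepNum G : ℝ) := by
  classical
  have hNpos : 0 < Fintype.card (Ordn V) := Fintype.card_pos_iff.mpr ⟨Fintype.equivFin V⟩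
  set N : ℝ := (Fintype.card (Ordn V) : ℝ) with hNdef
  have hNposR : (0:ℝ) < N := by rw [hNdef]; exact_mod_cast hNpos
  set Us : Ordn V → Finset V := fun ℓ =>
    univ.filter (fun u => ∀ w ∈ insert u (G.neighborFinset u), w ∉ cwSet G univ ℓ) with hUs
  set cS : V → ℕ := fun u => (univ.filter (fun ℓ : Ordn V => u ∈ cwSet G univ ℓ)).card with hcSdef
  set cU : V → ℕ := fun u => (univ.filter (fun ℓ : Ordn V => u ∈ Us ℓ)).card with hcUdef
  have hdpos : ∀ u : V, (0:ℝ) < (G.degree u : ℝ) + 1 := fun u => by positivity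
  -- exact value of cS
  have hcS : ∀ u : V, (cS u : ℝ) = N / ((G.degree u : ℝ) + 1) := by
    intro u
    have h1 : (univ.filter (fun ℓ : Ordn V => u ∈ cwSet G univ ℓ))
        = (univ.filter (fun ℓ : Ordn V => ∀ v ∈ G.neighborFinset u, ℓ u < ℓ v)) := by
      apply Finset.filter_congr
      intro ℓ _
      simp [cwSet]
    have h2 := cwSet_count G univ (Finset.mem_univ u)
    rw [Finset.inter_univ, G.card_neighborFinset_eq_degree] at h2
    rw [eq_div_iff (ne_of_gt (hdpos u))]
    have h3 : cS u = (univ.filter (fun ℓ : Ordn V =>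
        ∀ v ∈ G.neighborFinset u, ℓ u < ℓ v)).card := by
      simp only [hcSdef]
      rw [h1]
    rw [h3, hNdef, ← h2]
    push_cast
    ring
  -- lower bound on cU
  have hcU : ∀ u : V, N * max ((G.degree u : ℝ) / ((G.degree u : ℝ) + 1)
      - ∑ v ∈ G.neighborFinset u, (1 : ℝ) / ((G.degree v : ℝ) + 1)) 0 ≤ (cU u : ℝ) := by
    intro u
    rcases le_or_gt ((G.degree u : ℝ) / ((G.degree u : ℝ) + 1)
        - ∑ v ∈ G.neighborFinset u, (1 : ℝ) / ((G.degree v : ℝ) + 1)) 0 with hx | hx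
    · rw [max_eq_right hx, mul_zero]
      positivity
    rw [max_eq_left hx.le]
    -- union bound
    have hsplit := Finset.card_filter_add_card_filter_not
      (s := (univ : Finset (Ordn V))) (p := fun ℓ => u ∈ Us ℓ)
    have hsub : (univ.filter (fun ℓ : Ordn V => ¬ u ∈ Us ℓ))
        ⊆ (insert u (G.neighborFinset u)).biUnion
            (fun w => univ.filter (fun ℓ : Ordn V => w ∈ cwSet G univ ℓ)) := by
      intro ℓ hℓ
      simp only [Finset.mem_filter, Finset.mem_univ, true_and, hUs] at hℓ
      push_neg at hℓ
      obtain ⟨w, hw, hwS⟩ := hℓ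
      exact Finset.mem_biUnion.mpr ⟨w, hw, by simp [hwS]⟩
    have hub : (univ.filter (fun ℓ : Ordn V => ¬ u ∈ Us ℓ)).card
        ≤ ∑ w ∈ insert u (G.neighborFinset u), cS w :=
      le_trans (Finset.card_le_card hsub) (Finset.card_biUnion_le)
    have hcnt : Fintype.card (Ordn V) ≤ cU u + ∑ w ∈ insert u (G.neighborFinset u), cS w := by
      rw [← Finset.card_univ, ← hsplit]
      exact Nat.add_le_add_left hub _
    have hcntR : N ≤ (cU u : ℝ) + ∑ w ∈ insert u (G.neighborFinset u), (cS w : ℝ) := by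
      rw [hNdef]
      exact_mod_cast hcnt
    have hnm : u ∉ G.neighborFinset u := by
      intro h
      exact G.irrefl ((G.mem_neighborFinset u u).mp h)
    rw [Finset.sum_insert hnm] at hcntR
    have hsum : ∑ w ∈ G.neighborFinset u, (cS w : ℝ)
        = N * ∑ v ∈ G.neighborFinset u, (1 : ℝ) / ((G.degree v : ℝ) + 1) := by
      rw [Finset.mul_sum]
      exact Finset.sum_congr rfl (fun v _ => by rw [hcS v]; field_simp)
    rw [hsum, hcS u] at hcntR
    have halg : N * ((G.degree u : ℝ) / ((G.degree u : ℝ) + 1))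
        = N - N / ((G.degree u : ℝ) + 1) := by
      field_simp
      ring
    rw [mul_sub, halg]
    linarith
  -- per-order bound
  have hper : ∀ ℓ : Ordn V, ((cwSet G univ ℓ).card : ℝ)
      + ∑ u ∈ Us ℓ, (1 : ℝ) / ((G.degree u : ℝ) + 1) ≤ (indepNum G : ℝ) := by
    intro ℓ
    obtain ⟨T, hTsub, hTind, hTcard⟩ := exists_cw_indep G (Us ℓ)
    have hUnotS : ∀ v ∈ Us ℓ, v ∉ cwSet G univ ℓ := by
      intro v hv
      simp only [hUs, Finset.mem_filter, Finset.mem_univ, true_and] at hv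
      exact hv v (Finset.mem_insert_self v _)
    have hdisj : Disjoint (cwSet G univ ℓ) T := by
      rw [Finset.disjoint_left]
      intro a ha haT
      exact hUnotS a (hTsub haT) ha
    have hindep : IsIndepFinset G (cwSet G univ ℓ ∪ T) := by
      intro a ha b hb hadj
      rcases Finset.mem_union.mp ha with haS | haT
      · rcases Finset.mem_union.mp hb with hbS | hbT
        · exact cwSet_indep G univ ℓ a haS b hbS hadj
        · have hbU := hTsub hbT
          simp only [hUs, Finset.mem_filter, Finset.mem_univ, true_and] at hbU
          exact hbU a (Finset.mem_insert_of_mem ((G.mem_neighborFinset b a).mpr hadj.symm)) haS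
      · rcases Finset.mem_union.mp hb with hbS | hbT
        · have haU := hTsub haT
          simp only [hUs, Finset.mem_filter, Finset.mem_univ, true_and] at haU
          exact haU b (Finset.mem_insert_of_mem ((G.mem_neighborFinset a b).mpr hadj)) hbS
        · exact hTind a haT b hbT hadj
    have hcard := card_le_indepNum G hindep
    rw [Finset.card_union_of_disjoint hdisj] at hcard
    have : ((cwSet G univ ℓ).card : ℝ) + (T.card : ℝ) ≤ (indepNum G : ℝ) := by
      exact_mod_cast hcard
    linarith
  -- summation swap
  have hswapgen : ∀ (f : V → ℝ) (Ts : Ordn V → Finset V),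
      ∑ ℓ : Ordn V, ∑ u ∈ Ts ℓ, f u
        = ∑ u : V, f u * ((univ.filter (fun ℓ : Ordn V => u ∈ Ts ℓ)).card : ℝ) := by
    intro f Ts
    have h1 : ∀ ℓ : Ordn V, ∑ u ∈ Ts ℓ, f u = ∑ u : V, if u ∈ Ts ℓ then f u else 0 := by
      intro ℓ
      rw [Finset.sum_ite_mem]
      congr 1
      rw [Finset.univ_inter]
    rw [Finset.sum_congr rfl (fun ℓ _ => h1 ℓ), Finset.sum_comm]
    apply Finset.sum_congr rfl
    intro u _
    rw [← Finset.sum_filter, Finset.sum_const, nsmul_eq_mul, mul_comm]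
  -- assemble
  rw [← mul_le_mul_iff_right₀ hNposR]
  have hSsum : ∑ ℓ : Ordn V, ((cwSet G univ ℓ).card : ℝ) = ∑ u : V, (cS u : ℝ) := by
    have h := hswapgen (fun _ => (1:ℝ)) (fun ℓ => cwSet G univ ℓ)
    simp only [one_mul] at h
    calc ∑ ℓ : Ordn V, ((cwSet G univ ℓ).card : ℝ)
        = ∑ ℓ : Ordn V, ∑ _u ∈ cwSet G univ ℓ, (1:ℝ) := by
          refine Finset.sum_congr rfl (fun ℓ _ => ?_)
          rw [Finset.sum_const, nsmul_eq_mul, mul_one]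
      _ = ∑ u : V, ((univ.filter (fun ℓ : Ordn V => u ∈ cwSet G univ ℓ)).card : ℝ) := h
      _ = ∑ u : V, (cS u : ℝ) := rfl
  have hUsum : ∑ ℓ : Ordn V, ∑ u ∈ Us ℓ, (1 : ℝ) / ((G.degree u : ℝ) + 1)
      = ∑ u : V, (1 : ℝ) / ((G.degree u : ℝ) + 1) * (cU u : ℝ) :=
    hswapgen _ _
  calc N * ((∑ u : V, (1 : ℝ) / ((G.degree u : ℝ) + 1))
      + ∑ u : V, (1 : ℝ) / ((G.degree u : ℝ) + 1)
          * max ((G.degree u : ℝ) / ((G.degree u : ℝ) + 1)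
              - ∑ v ∈ G.neighborFinset u, (1 : ℝ) / ((G.degree v : ℝ) + 1)) 0)
      = ∑ u : V, N / ((G.degree u : ℝ) + 1)
        + ∑ u : V, (1 : ℝ) / ((G.degree u : ℝ) + 1)
            * (N * max ((G.degree u : ℝ) / ((G.degree u : ℝ) + 1)
              - ∑ v ∈ G.neighborFinset u, (1 : ℝ) / ((G.degree v : ℝ) + 1)) 0) := by
        rw [mul_add, Finset.mul_sum, Finset.mul_sum]
        congr 1
        · exact Finset.sum_congr rfl (fun u _ => by field_simp)
        · exact Finset.sum_congr rfl (fun u _ => by ring)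
    _ ≤ ∑ u : V, (cS u : ℝ) + ∑ u : V, (1 : ℝ) / ((G.degree u : ℝ) + 1) * (cU u : ℝ) := by
        apply add_le_add
        · exact Finset.sum_le_sum (fun u _ => le_of_eq (hcS u).symm)
        · refine Finset.sum_le_sum (fun u _ => ?_)
          have h0 : (0:ℝ) ≤ (1 : ℝ) / ((G.degree u : ℝ) + 1) := by positivity
          exact mul_le_mul_of_nonneg_left (hcU u) h0
    _ = ∑ ℓ : Ordn V, (((cwSet G univ ℓ).card : ℝ)
          + ∑ u ∈ Us ℓ, (1 : ℝ) / ((G.degree u : ℝ) + 1)) := by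
        rw [Finset.sum_add_distrib, hSsum, hUsum]
    _ ≤ ∑ _ℓ : Ordn V, (indepNum G : ℝ) := Finset.sum_le_sum (fun ℓ _ => hper ℓ)
    _ = N * (indepNum G : ℝ) := by
        rw [Finset.sum_const, Finset.card_univ, nsmul_eq_mul]
end

section
/- For every integer m ≥ 2, the bound γ_CSSF(K_{1,m}) = min over t ∈ {1,…,m} of [t + (m+1−t)(m−t)/(m+1)] satisfies γ_CSSF(K_{1,m}) > (3/4)·m. -/
open Finset

/-- For every integer `m ≥ 2`,
`γ_CSSF(K_{1,m}) = min_{t ∈ [m]} [t + (m+1−t)(m−t)/(m+1)] > (3/4)·m`;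
i.e. every term of the minimum exceeds `(3/4)·m`. -/
theorem star_CSSF_gt (m : ℕ) (hm : 2 ≤ m) :
    ∀ t ∈ Finset.Icc 1 m,
      (3 / 4 : ℝ) * m < (t : ℝ) + ((m : ℝ) + 1 - t) * ((m : ℝ) - t) / ((m : ℝ) + 1) := by
  intro t ht
  have hpos : (0 : ℝ) < (m : ℝ) + 1 := by positivity
  have hm' : (2 : ℝ) ≤ (m : ℝ) := by exact_mod_cast hm
  have hx : ((m : ℝ) + 1 - t) * ((m : ℝ) - t) / ((m : ℝ) + 1) * ((m : ℝ) + 1)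
      = ((m : ℝ) + 1 - t) * ((m : ℝ) - t) := div_mul_cancel₀ _ hpos.ne'
  nlinarith [sq_nonneg (2 * (t : ℝ) - m), hx, hpos, sq_nonneg ((t:ℝ) - m)]
end
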